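/- arXiv:1509.06226 — 9 statements merged into one kernel-verified Lean document; each statement's English description precedes it below -/
import Mathlib

section
/- Let A ∈ ℝ^{n×n}, H ∈ ℝ^{n×p} with rank(H) = p, C ∈ ℝ^{l×n}, and L ∈ ℝ^{n×l} satisfy L·C·A^r·H = H and L·C·A^d·H = 0 for 0 ≤ d < r. Then for each d with 0 ≤ d ≤ r-1, rank(C·A^d·H) ≤ l - p. -/
theorem stmt_3 (n p l r : ℕ)
    (A : Matrix (Fin n) (Fin n) ℝ) (H : Matrix (Fin n) (Fin p) ℝ)
    (C : Matrix (Fin l) (Fin n) ℝ) (L : Matrix (Fin n) (Fin l) ℝ)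
    (hH : H.rank = p)
    (hL : L * C * A ^ r * H = H)
    (hLd : ∀ d < r, L * C * A ^ d * H = 0) :
    ∀ d < r, (C * A ^ d * H).rank ≤ l - p := by
  intro d hd
  have hLrank : p ≤ L.rank := by
    have : (L * (C * A ^ r * H)).rank ≤ L.rank := Matrix.rank_mul_le_left _ _
    rwa [← Matrix.mul_assoc, ← Matrix.mul_assoc, hL, hH] at this
  have hzero : L * (C * A ^ d * H) = 0 := by
    rw [← Matrix.mul_assoc, ← Matrix.mul_assoc]; exact hLd d hd
  have := Matrix.rank_add_rank_le_card_of_mul_eq_zero hzero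
  simp only [Fintype.card_fin] at this
  omega
end

section
/- Let l = p, A ∈ ℝ^{n×n}, H ∈ ℝ^{n×p} with rank(H) = p, C ∈ ℝ^{p×n}, and L ∈ ℝ^{n×p} satisfy L·C·A^r·H = H and L·C·A^d·H = 0 for 0 ≤ d < r. Then C·A^d·H = 0 for all 0 ≤ d ≤ r-1 and rank(L) = p. -/
namespace Matrix

variable {R : Type*} [CommRing R] [Nontrivial R] {m n o : Type*} [Fintype n]

theorem linearIndependent_col_of_rank_eq_card_width {L : Matrix m n R}
    (h : L.rank = Fintype.card n) : LinearIndependent R L.col := by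
  rw [linearIndependent_iff_card_eq_finrank_span, ← h, rank_eq_finrank_span_cols, Set.finrank]

theorem eq_zero_of_mul_eq_zero_of_rank_eq_card_width [Fintype o] [DecidableEq o]
    {L : Matrix m n R} {M : Matrix n o R} (h : L.rank = Fintype.card n) (hLM : L * M = 0) :
    M = 0 := by
  have hinj : Function.Injective L.mulVec :=
    mulVec_injective_iff.mpr (linearIndependent_col_of_rank_eq_card_width h)
  refine ext_of_mulVec_single fun j => hinj ?_
  rw [mulVec_mulVec, hLM, zero_mulVec, zero_mulVec, mulVec_zero]

end Matrix

theorem stmt_4 (n p r : ℕ)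
    (A : Matrix (Fin n) (Fin n) ℝ) (H : Matrix (Fin n) (Fin p) ℝ)
    (C : Matrix (Fin p) (Fin n) ℝ) (L : Matrix (Fin n) (Fin p) ℝ)
    (hH : H.rank = p)
    (hL : L * C * A ^ r * H = H)
    (hLd : ∀ d < r, L * C * A ^ d * H = 0) :
    (∀ d < r, C * A ^ d * H = 0) ∧ L.rank = p := by
  have hLrank : L.rank = p := by
    refine le_antisymm L.rank_le_width ?_
    calc p = H.rank := hH.symm
      _ = (L * (C * A ^ r * H)).rank := by simp only [← Matrix.mul_assoc, hL]
      _ ≤ L.rank := L.rank_mul_le_left _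
  refine ⟨fun d hd => ?_, hLrank⟩
  refine Matrix.eq_zero_of_mul_eq_zero_of_rank_eq_card_width (by simpa using hLrank) ?_
  simpa only [Matrix.mul_assoc] using hLd d hd
end

section
/- Let A ∈ ℂ^{n×n}, H ∈ ℂ^{n×p}, C ∈ ℂ^{p×n} with C·A^d·H = 0 for 0 ≤ d ≤ r-1 and C·A^r·H invertible. Set L = H·(C·A^r·H)^{-1}. If λ ≠ 0 is an eigenvalue of A - L·C·A^{r+1} with eigenvector ν, then C·ν = 0 and (A - λI)·ν ∈ range(H); in particular there exists μ with (λI - A)·ν = H·μ and C·ν = 0, i.e., [λI - A, H; C, 0] has nontrivial kernel (λ is an invariant zero of (A,H,C)). -/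
theorem stmt_6 (n p r : ℕ)
    (A : Matrix (Fin n) (Fin n) ℂ) (H : Matrix (Fin n) (Fin p) ℂ)
    (C : Matrix (Fin p) (Fin n) ℂ)
    (hCd : ∀ d < r, C * A ^ d * H = 0)
    (hinv : IsUnit (C * A ^ r * H))
    (L : Matrix (Fin n) (Fin p) ℂ)
    (hLdef : L = H * (C * A ^ r * H)⁻¹)
    (lam : ℂ) (hlam : lam ≠ 0)
    (ν : Fin n → ℂ) (hν : ν ≠ 0)
    (heig : (A - L * C * A ^ (r + 1)).mulVec ν = lam • ν) :
    C.mulVec ν = 0 ∧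
      ∃ μ : Fin p → ℂ, (lam • (1 : Matrix (Fin n) (Fin n) ℂ) - A).mulVec ν = H.mulVec μ := by
  have hCL : ∀ d < r, C * A ^ d * L = 0 := by
    intro d hd
    rw [hLdef, ← Matrix.mul_assoc, hCd d hd, Matrix.zero_mul]
  have hCrL : C * A ^ r * L = 1 := by
    rw [hLdef, ← Matrix.mul_assoc,
      Matrix.mul_nonsing_inv _ ((Matrix.isUnit_iff_isUnit_det _).mp hinv)]
  have step : ∀ d < r, (C * A ^ (d + 1)).mulVec ν = lam • (C * A ^ d).mulVec ν := by
    intro d hd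
    have h1 : (C * A ^ d) * (A - L * C * A ^ (r + 1)) = C * A ^ (d + 1) := by
      rw [Matrix.mul_sub, Matrix.mul_assoc L, ← Matrix.mul_assoc (C * A ^ d),
        hCL d hd, Matrix.zero_mul, sub_zero, Matrix.mul_assoc, ← pow_succ]
    have := congrArg (fun v => (C * A ^ d).mulVec v) heig
    simpa [Matrix.mulVec_mulVec, h1, Matrix.mulVec_smul] using this
  have hpow : ∀ d, d ≤ r → (C * A ^ d).mulVec ν = lam ^ d • C.mulVec ν := by
    intro d
    induction d with
    | zero => intro _; simp
    | succ d ih =>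
      intro hd
      rw [step d (by omega), ih (by omega), smul_smul, ← pow_succ']
  have hr0 : (C * A ^ r) * (A - L * C * A ^ (r + 1)) = 0 := by
    rw [Matrix.mul_sub, Matrix.mul_assoc L, ← Matrix.mul_assoc (C * A ^ r),
      hCrL, Matrix.one_mul, Matrix.mul_assoc, ← pow_succ, sub_self]
  have hCr : lam • (C * A ^ r).mulVec ν = 0 := by
    have := congrArg (fun v => (C * A ^ r).mulVec v) heig
    simpa [Matrix.mulVec_mulVec, hr0, Matrix.mulVec_smul, eq_comm] using this
  have hCν : C.mulVec ν = 0 := by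
    rw [hpow r le_rfl, smul_smul] at hCr
    have : lam * lam ^ r ≠ 0 := mul_ne_zero hlam (pow_ne_zero _ hlam)
    exact (smul_eq_zero.mp hCr).resolve_left this
  refine ⟨hCν, -(((C * A ^ r * H)⁻¹ * (C * A ^ (r + 1))).mulVec ν), ?_⟩
  have hLC : L * C * A ^ (r + 1) = H * ((C * A ^ r * H)⁻¹ * (C * A ^ (r + 1))) := by
    rw [hLdef, Matrix.mul_assoc, Matrix.mul_assoc, Matrix.mul_assoc]
  have : lam • ν - A.mulVec ν = -(L * C * A ^ (r + 1)).mulVec ν := by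
    rw [← heig, Matrix.sub_mulVec]; abel
  rw [Matrix.sub_mulVec, Matrix.smul_mulVec, Matrix.one_mulVec, this, hLC,
    Matrix.mulVec_neg, Matrix.mulVec_mulVec]
end

section
/- Let A ∈ ℂ^{n×n}, H ∈ ℂ^{n×p}, C ∈ ℂ^{l×n}, L ∈ ℂ^{n×l}, r ∈ ℕ, with rank(H) = p, L·C·A^r·H = H, and L·C·A^d·H = 0 for 0 ≤ d < r. If z ∈ ℂ and there exist ν ∈ ℂ^n, μ ∈ ℂ^p, not both zero, with (zI - A)·ν = H·μ and C·ν = 0, then z is an eigenvalue of A - L·C·A^{r+1}. -/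
open Matrix Finset

theorem stmt_7 (n p l r : ℕ)
    (A : Matrix (Fin n) (Fin n) ℂ) (H : Matrix (Fin n) (Fin p) ℂ)
    (C : Matrix (Fin l) (Fin n) ℂ) (L : Matrix (Fin n) (Fin l) ℂ)
    (hH : H.rank = p)
    (hL : L * C * A ^ r * H = H)
    (hLd : ∀ d < r, L * C * A ^ d * H = 0)
    (z : ℂ) (ν : Fin n → ℂ) (μ : Fin p → ℂ)
    (hne : ¬(ν = 0 ∧ μ = 0))
    (h1 : (z • (1 : Matrix (Fin n) (Fin n) ℂ) - A).mulVec ν = H.mulVec μ)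
    (h2 : C.mulVec ν = 0) :
    ∃ w : Fin n → ℂ, w ≠ 0 ∧ (A - L * C * A ^ (r + 1)).mulVec w = z • w := by
  have h1' : z • ν - A.mulVec ν = H.mulVec μ := by
    rwa [Matrix.sub_mulVec, Matrix.smul_mulVec, Matrix.one_mulVec] at h1
  have hA : A.mulVec ν = z • ν - H.mulVec μ := by rw [← h1']; abel
  -- ν ≠ 0
  have hν : ν ≠ 0 := by
    intro h0
    apply hne
    refine ⟨h0, ?_⟩
    have hμ0 : H.mulVec μ = 0 := by rw [← h1', h0, Matrix.mulVec_zero, smul_zero, sub_zero]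
    have hinj : Function.Injective H.mulVecLin := by
      rw [← LinearMap.ker_eq_bot, ← Submodule.finrank_eq_zero (R := ℂ)]
      have := LinearMap.finrank_range_add_finrank_ker H.mulVecLin
      rw [show Module.finrank ℂ (LinearMap.range H.mulVecLin) = H.rank from rfl, hH] at this
      have h2 : Module.finrank ℂ (Fin p → ℂ) = p := by simp
      omega
    have : H.mulVecLin μ = H.mulVecLin 0 := by
      simpa [Matrix.mulVecLin_apply] using hμ0
    exact hinj this
  -- key formula
  have key : ∀ k, (A ^ k).mulVec ν
      = z ^ k • ν - ∑ j ∈ range k, z ^ j • (A ^ (k - 1 - j) * H).mulVec μ := by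
    intro k
    induction k with
    | zero => simp
    | succ k ih =>
      have hstep : (A ^ (k + 1)).mulVec ν = A.mulVec ((A ^ k).mulVec ν) := by
        rw [Matrix.mulVec_mulVec, ← pow_succ']
      rw [hstep, ih]
      have hlin : A.mulVec (z ^ k • ν - ∑ j ∈ range k, z ^ j • (A ^ (k - 1 - j) * H).mulVec μ)
          = z ^ k • A.mulVec ν - ∑ j ∈ range k, z ^ j • (A ^ (k - j) * H).mulVec μ := by
        rw [show A.mulVec = A.mulVecLin from rfl, map_sub, _root_.map_smul, map_sum]
        congr 1
        apply Finset.sum_congr rfl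
        intro j hj
        rw [_root_.map_smul]
        congr 1
        show A.mulVec ((A ^ (k - 1 - j) * H).mulVec μ) = _
        have hp : A * A ^ (k - 1 - j) = A ^ (k - j) := by
          rw [← pow_succ']; congr 1; simp at hj; omega
        rw [Matrix.mulVec_mulVec, ← Matrix.mul_assoc, hp]
      rw [hlin, hA, Finset.sum_range_succ]
      have hkk : k + 1 - 1 - k = 0 := by omega
      rw [hkk, pow_zero, Matrix.one_mul]
      rw [smul_sub, smul_smul, ← pow_succ]
      simp only [Nat.add_sub_cancel]
      abel
  have hk := key (r + 1)
  have hLC : (L * C * A ^ (r + 1)).mulVec ν = - H.mulVec μ := by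
    have e : (L * C * A ^ (r + 1)).mulVec ν = (L * C).mulVec ((A ^ (r + 1)).mulVec ν) := by
      rw [Matrix.mulVec_mulVec]
    rw [e, hk, show (L*C).mulVec = (L*C).mulVecLin from rfl, map_sub, _root_.map_smul, map_sum]
    have hz : (L * C).mulVecLin ν = 0 := by
      simp [Matrix.mulVecLin_apply, ← Matrix.mulVec_mulVec, h2]
    rw [hz, smul_zero, zero_sub]
    congr 1
    rw [Finset.sum_eq_single 0]
    · simp only [_root_.map_smul, pow_zero, one_smul, Matrix.mulVecLin_apply]
      rw [Matrix.mulVec_mulVec, ← Matrix.mul_assoc]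
      show ((L * C) * A ^ (r + 1 - 1 - 0) * H).mulVec μ = _
      simpa using congrArg (fun M => M.mulVec μ) hL
    · intro j hj hj0
      simp only [_root_.map_smul, Matrix.mulVecLin_apply, Matrix.mulVec_mulVec, ← Matrix.mul_assoc]
      have : r + 1 - 1 - j = r - j := by omega
      rw [this, hLd (r - j) (by simp at hj; omega), Matrix.zero_mulVec, smul_zero]
    · simp
  refine ⟨ν, hν, ?_⟩
  rw [Matrix.sub_mulVec, hA, hLC]
  abel
end

section
/- Let A ∈ ℝ^{n×n}, H ∈ ℝ^{n×p} with rank(H) = p > 0, and C ∈ ℝ^{l×n}. Then for all r ≥ n there is no matrix L ∈ ℝ^{n×l} satisfying L·C·A^r·H = H and L·C·A^d·H = 0 for all 0 ≤ d < r. -/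
open Polynomial

theorem stmt_9 (n p l : ℕ)
    (A : Matrix (Fin n) (Fin n) ℝ) (H : Matrix (Fin n) (Fin p) ℝ)
    (C : Matrix (Fin l) (Fin n) ℝ)
    (hH : H.rank = p) (hp : 0 < p) :
    ∀ r ≥ n, ¬ ∃ L : Matrix (Fin n) (Fin l) ℝ,
      L * C * A ^ r * H = H ∧ ∀ d < r, L * C * A ^ d * H = 0 := by
  intro r hr
  rintro ⟨L, h1, h2⟩
  set q : ℝ[X] := X ^ r %ₘ A.charpoly with hq
  have key : A ^ r = ∑ i ∈ Finset.range (q.natDegree + 1), q.coeff i • A ^ i := by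
    rw [Matrix.pow_eq_aeval_mod_charpoly, Polynomial.aeval_eq_sum_range]
  have hdeg : q.degree < (n : WithBot ℕ) := by
    have := Polynomial.degree_modByMonic_lt (X ^ r : ℝ[X]) A.charpoly_monic
    rwa [A.charpoly_degree_eq_dim, Fintype.card_fin] at this
  have hH0 : H = 0 := by
    rw [← h1, key, Matrix.mul_sum, Matrix.sum_mul]
    refine Finset.sum_eq_zero fun i hi => ?_
    rw [mul_smul_comm, Matrix.smul_mul]
    by_cases hc : q.coeff i = 0
    · rw [hc, zero_smul]
    · have hiq : (i : WithBot ℕ) ≤ q.degree := Polynomial.le_degree_of_ne_zero hc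
      have hin : i < n := by exact_mod_cast lt_of_le_of_lt hiq hdeg
      rw [h2 i (lt_of_lt_of_le hin hr), smul_zero]
  rw [hH0, Matrix.rank_zero] at hH
  omega
end

section
/- Let A ∈ ℝ^{n×n}, H ∈ ℝ^{n×p} with rank(H) = p, C ∈ ℝ^{l×n}, and define S_r = [C·A^r·H, C·A^{r-1}·H, …, C·H] ∈ ℝ^{l×(r+1)p} and S_{r-1} = [C·A^{r-1}·H, …, C·H] ∈ ℝ^{l×rp}. There exists L ∈ ℝ^{n×l} with L·S_r = [H, 0, …, 0] if and only if rank(S_r) − rank(S_{r-1}) = p. -/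
/-- Horizontal concatenation of Markov parameters
`S_r = [C·A^r·H, C·A^{r-1}·H, …, C·H]`, with column blocks indexed by `Fin (r+1)`. -/
def Sblock (n p l r : ℕ) (A : Matrix (Fin n) (Fin n) ℝ)
    (H : Matrix (Fin n) (Fin p) ℝ) (C : Matrix (Fin l) (Fin n) ℝ) :
    Matrix (Fin l) (Fin (r + 1) × Fin p) ℝ :=
  Matrix.of fun i dj => (C * A ^ (r - (dj.1 : ℕ)) * H) i dj.2

/-!
Reorder the column blocks so that `S_r = [B | S_{r-1}]` with `B = C A^r H`; then
`L S_r = [H, 0, …, 0]` says `L B = H` and `L S_{r-1} = 0`. As `H` is injective, such an `L`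
exists iff `B` is injective and its column space `U` meets the column space `W` of `S_{r-1}` only
in `0` (conversely, take `L = H g π` with `π` the quotient map by `W` and `g` a left inverse of
`π B`). Since `dim (U + W) - dim W = dim U - dim (U ∩ W)` and `dim U = p - dim ker B`, these two
conditions say exactly that `rank S_r - rank S_{r-1} = p`.
-/

open Module

namespace Matrix

lemma col_fromCols {R l p q : Type*} (B : Matrix l p R) (P : Matrix l q R) :
    (fromCols B P).col = Sum.elim B.col P.col := by
  funext j; cases j <;> rfl

lemma mul_submatrix_id_eq_iff {R l m o o' : Type*} [Fintype l] [NonUnitalNonAssocSemiring R]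
    (L : Matrix m l R) (S : Matrix l o R) (T : Matrix m o R) (e : o' ≃ o) :
    L * S.submatrix id e = T.submatrix id e ↔ L * S = T := by
  have hL : L * S.submatrix id e = (L * S).submatrix id e := by
    ext; simp [mul_apply]
  rw [hL]
  constructor
  · intro h
    ext i j
    simpa using congrFun (congrFun h i) (e.symm j)
  · rintro rfl
    rfl

variable {K : Type*} [Field K] {l n p q : Type*} [Fintype p] [Fintype q]

lemma range_mulVecLin_fromCols (B : Matrix l p K) (P : Matrix l q K) :
    LinearMap.range (fromCols B P).mulVecLin =
      LinearMap.range B.mulVecLin ⊔ LinearMap.range P.mulVecLin := by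
  simp only [range_mulVecLin, col_fromCols, Set.Sum.elim_range, Submodule.span_union]

lemma rank_add_finrank_ker_mulVecLin (B : Matrix l p K) :
    B.rank + finrank K (LinearMap.ker B.mulVecLin) = Fintype.card p := by
  rw [rank, LinearMap.finrank_range_add_finrank_ker, finrank_fintype_fun_eq_card]

lemma rank_eq_card_iff_ker_mulVecLin_eq_bot (B : Matrix l p K) :
    B.rank = Fintype.card p ↔ LinearMap.ker B.mulVecLin = ⊥ := by
  have := B.rank_add_finrank_ker_mulVecLin
  rw [← Submodule.finrank_eq_zero]
  omega

lemma rank_fromCols_sub_rank_eq_card_iff (B : Matrix l p K) (P : Matrix l q K) :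
    (fromCols B P).rank - P.rank = Fintype.card p ↔
      LinearMap.ker B.mulVecLin = ⊥ ∧
        Disjoint (LinearMap.range B.mulVecLin) (LinearMap.range P.mulVecLin) := by
  have hsup := Submodule.finrank_sup_add_finrank_inf_eq
    (LinearMap.range B.mulVecLin) (LinearMap.range P.mulVecLin)
  have hinf := Submodule.finrank_mono
    (inf_le_left : LinearMap.range B.mulVecLin ⊓ LinearMap.range P.mulVecLin ≤ _)
  have hB := B.rank_add_finrank_ker_mulVecLin
  rw [← range_mulVecLin_fromCols] at hsup
  rw [disjoint_iff, ← Submodule.finrank_eq_zero, ← Submodule.finrank_eq_zero (S := _ ⊓ _)]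
  simp only [rank] at hB ⊢
  omega

lemma exists_mul_eq_and_mul_eq_zero [Fintype l] (B : Matrix l p K) (P : Matrix l q K)
    (H : Matrix n p K) (hB : LinearMap.ker B.mulVecLin = ⊥)
    (hBP : Disjoint (LinearMap.range B.mulVecLin) (LinearMap.range P.mulVecLin)) :
    ∃ L : Matrix n l K, L * B = H ∧ L * P = 0 := by
  classical
  set W := LinearMap.range P.mulVecLin
  have hker : LinearMap.ker (W.mkQ ∘ₗ B.mulVecLin) = ⊥ := by
    rw [LinearMap.ker_comp, Submodule.ker_mkQ, eq_bot_iff]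
    intro x hx
    have : B.mulVecLin x = 0 := (disjoint_iff_inf_le.mp hBP) ⟨⟨x, rfl⟩, hx⟩
    rwa [← LinearMap.mem_ker, hB] at this
  obtain ⟨g, hg⟩ := (W.mkQ ∘ₗ B.mulVecLin).exists_leftInverse_of_injective hker
  refine ⟨LinearMap.toMatrix' (H.mulVecLin ∘ₗ g ∘ₗ W.mkQ), ?_, ?_⟩
  · apply toLin'.injective
    rw [toLin'_mul, toLin'_toMatrix', toLin'_apply', toLin'_apply', LinearMap.comp_assoc,
      LinearMap.comp_assoc, hg, LinearMap.comp_id]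
  · apply toLin'.injective
    refine LinearMap.ext fun y => ?_
    have hy : P *ᵥ y ∈ W := ⟨y, rfl⟩
    rw [toLin'_mul, toLin'_toMatrix', toLin'_apply']
    simp [(Submodule.Quotient.mk_eq_zero W).mpr hy]

lemma ker_eq_bot_and_disjoint_of_mul_eq [Fintype l] {B : Matrix l p K} {P : Matrix l q K}
    {H : Matrix n p K} (hH : LinearMap.ker H.mulVecLin = ⊥) {L : Matrix n l K} (hLB : L * B = H)
    (hLP : L * P = 0) :
    LinearMap.ker B.mulVecLin = ⊥ ∧
      Disjoint (LinearMap.range B.mulVecLin) (LinearMap.range P.mulVecLin) := by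
  have hLB' (x : p → K) : L *ᵥ (B *ᵥ x) = H *ᵥ x := by rw [mulVec_mulVec, hLB]
  have hLP' (y : q → K) : L *ᵥ (P *ᵥ y) = 0 := by rw [mulVec_mulVec, hLP, zero_mulVec]
  have eq_zero_of_mem {x : p → K} (hx : B *ᵥ x ∈ LinearMap.range P.mulVecLin) : x = 0 := by
    obtain ⟨y, hy⟩ := hx
    rw [← Submodule.mem_bot K, ← hH, LinearMap.mem_ker, mulVecLin_apply, ← hLB', ← hLP' y]
    exact congrArg _ hy.symm
  refine ⟨eq_bot_iff.mpr fun x hx => eq_zero_of_mem ?_, disjoint_iff_inf_le.mpr ?_⟩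
  · rw [show B *ᵥ x = 0 from hx]; exact zero_mem _
  · rintro _ ⟨⟨x, rfl⟩, hx⟩
    rw [mulVecLin_apply, eq_zero_of_mem hx, mulVec_zero]; exact zero_mem _

theorem exists_mul_eq_and_mul_eq_zero_iff [Fintype l] (B : Matrix l p K) (P : Matrix l q K)
    {H : Matrix n p K} (hH : H.rank = Fintype.card p) :
    (∃ L : Matrix n l K, L * B = H ∧ L * P = 0) ↔
      (fromCols B P).rank - P.rank = Fintype.card p := by
  rw [rank_fromCols_sub_rank_eq_card_iff]
  constructor
  · rintro ⟨L, hLB, hLP⟩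
    exact ker_eq_bot_and_disjoint_of_mul_eq (H.rank_eq_card_iff_ker_mulVecLin_eq_bot.mp hH) hLB hLP
  · rintro ⟨hB, hBP⟩
    exact exists_mul_eq_and_mul_eq_zero B P H hB hBP

end Matrix

def finSuccProdEquiv (r : ℕ) (α : Type*) : Fin (r + 1) × α ≃ α ⊕ Fin r × α :=
  ((finSuccEquiv r).prodCongr (Equiv.refl α)).trans optionProdEquiv

open Matrix

lemma Sblock_submatrix_finSuccProdEquiv (n p l r : ℕ) (A : Matrix (Fin n) (Fin n) ℝ)
    (H : Matrix (Fin n) (Fin p) ℝ) (C : Matrix (Fin l) (Fin n) ℝ) :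
    (Sblock n p l r A H C).submatrix id (finSuccProdEquiv r (Fin p)).symm =
      fromCols (C * A ^ r * H) (of fun i dj => (C * A ^ (r - 1 - (dj.1 : ℕ)) * H) i dj.2) := by
  ext i (k | ⟨j, k⟩)
  · simp [Sblock, finSuccProdEquiv]
  · simp [Sblock, finSuccProdEquiv, Nat.sub_sub, Nat.add_comm 1]

theorem stmt_10 (n p l r : ℕ)
    (A : Matrix (Fin n) (Fin n) ℝ) (H : Matrix (Fin n) (Fin p) ℝ)
    (C : Matrix (Fin l) (Fin n) ℝ)
    (hH : H.rank = p)
    (Sprev : Matrix (Fin l) (Fin r × Fin p) ℝ)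
    (hSprev : Sprev = Matrix.of fun i dj => (C * A ^ (r - 1 - (dj.1 : ℕ)) * H) i dj.2) :
    (∃ L : Matrix (Fin n) (Fin l) ℝ,
        L * Sblock n p l r A H C =
          Matrix.of fun i (dj : Fin (r + 1) × Fin p) =>
            if dj.1 = 0 then H i dj.2 else 0) ↔
      (Sblock n p l r A H C).rank - Sprev.rank = p := by
  set e := (finSuccProdEquiv r (Fin p)).symm
  have hS : (Sblock n p l r A H C).submatrix id e = fromCols (C * A ^ r * H) Sprev :=
    hSprev ▸ Sblock_submatrix_finSuccProdEquiv n p l r A H C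
  have hT : (of fun i (dj : Fin (r + 1) × Fin p) => if dj.1 = 0 then H i dj.2 else 0).submatrix
      id e = fromCols H 0 := by
    ext i (k | ⟨j, k⟩) <;> simp [e, finSuccProdEquiv, Fin.succ_ne_zero]
  have hrank : (Sblock n p l r A H C).rank = (fromCols (C * A ^ r * H) Sprev).rank := by
    rw [← hS]
    exact (rank_submatrix _ (Equiv.refl _) e).symm
  calc
    _ ↔ ∃ L : Matrix (Fin n) (Fin l) ℝ, L * (C * A ^ r * H) = H ∧ L * Sprev = 0 :=
      exists_congr fun L => by
        rw [← mul_submatrix_id_eq_iff L _ _ e, hS, hT, mul_fromCols, fromCols_ext_iff]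
    _ ↔ (fromCols (C * A ^ r * H) Sprev).rank - Sprev.rank = p := by
      simpa only [Fintype.card_fin] using
        exists_mul_eq_and_mul_eq_zero_iff (C * A ^ r * H) Sprev (hH.trans (Fintype.card_fin p).symm)
    _ ↔ _ := by rw [hrank]
end

section
/- Let A ∈ ℝ^{n×n}, H ∈ ℝ^{n×p} with rank(H) = p, C ∈ ℝ^{l×n}. Define S_r = [C·A^r·H, …, C·H], S_{r-1} = [C·A^{r-1}·H, …, C·H], and let M_r be the block lower-triangular Toeplitz matrix with block rows [C·A^i·H, C·A^{i-1}·H, …, C·H, 0, …, 0] for i = 0,…,r (blocks of size l×p, first column blocks C·H, C·A·H, …, C·A^r·H). If rank(S_r) − rank(S_{r-1}) = p, then rank(M_r) − rank(M_{r-1}) = p. -/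
/-- Block lower-triangular Toeplitz matrix of Markov parameters:
`(i,j)` block is `C·A^{i-j}·H` for `j ≤ i`, `0` otherwise. -/
def Mblock (n p l s : ℕ) (A : Matrix (Fin n) (Fin n) ℝ)
    (H : Matrix (Fin n) (Fin p) ℝ) (C : Matrix (Fin l) (Fin n) ℝ) :
    Matrix (Fin s × Fin l) (Fin s × Fin p) ℝ :=
  Matrix.of fun ia jb =>
    if (jb.1 : ℕ) ≤ (ia.1 : ℕ) then
      (C * A ^ ((ia.1 : ℕ) - (jb.1 : ℕ)) * H) ia.2 jb.2
    else 0

open Matrix Submodule Module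

/-- glue a first block and the rest into a vector indexed by `Fin (r+1) × Fin p` -/
def aux12_glue (r p : ℕ) (x : Fin p → ℝ) (w : Fin r × Fin p → ℝ) :
    Fin (r + 1) × Fin p → ℝ :=
  fun jb => Fin.cases (x jb.2) (fun k => w (k, jb.2)) jb.1

lemma aux12_glue_eq (r p : ℕ) (u : Fin (r + 1) × Fin p → ℝ) :
    u = aux12_glue r p (fun b => u (0, b)) (fun kb => u (kb.1.succ, kb.2)) := by
  funext jb
  obtain ⟨j, b⟩ := jb
  induction j using Fin.cases <;> simp [aux12_glue]

/-- shift embedding: zero first block row -/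
def aux12_shift (r l : ℕ) : ((Fin r × Fin l) → ℝ) →ₗ[ℝ] ((Fin (r + 1) × Fin l) → ℝ) where
  toFun v := fun ia => Fin.cases 0 (fun j => v (j, ia.2)) ia.1
  map_add' v w := by
    funext ia
    obtain ⟨i, a⟩ := ia
    induction i using Fin.cases <;> simp
  map_smul' c v := by
    funext ia
    obtain ⟨i, a⟩ := ia
    induction i using Fin.cases <;> simp

lemma aux12_shift_inj (r l : ℕ) : Function.Injective (aux12_shift r l) := by
  intro v w h
  funext jb
  obtain ⟨j, a⟩ := jb
  have := congrFun h (j.succ, a)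
  simpa [aux12_shift] using this

/-- the stacked block column `F = [CH; CAH; …; CA^rH]` -/
def aux12_F (n p l r : ℕ) (A : Matrix (Fin n) (Fin n) ℝ)
    (H : Matrix (Fin n) (Fin p) ℝ) (C : Matrix (Fin l) (Fin n) ℝ) :
    Matrix (Fin (r + 1) × Fin l) (Fin p) ℝ :=
  Matrix.of fun ia b => (C * A ^ (ia.1 : ℕ) * H) ia.2 b

section main
variable (n p l r : ℕ) (A : Matrix (Fin n) (Fin n) ℝ)
    (H : Matrix (Fin n) (Fin p) ℝ) (C : Matrix (Fin l) (Fin n) ℝ)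

lemma aux12_S_mulVec (x : Fin p → ℝ) (w : Fin r × Fin p → ℝ) :
    (Sblock n p l r A H C).mulVec (aux12_glue r p x w)
      = (C * A ^ r * H).mulVec x
        + (Matrix.of fun i (dj : Fin r × Fin p) =>
            (C * A ^ (r - 1 - (dj.1 : ℕ)) * H) i dj.2).mulVec w := by
  funext a
  simp only [Matrix.mulVec, dotProduct, Sblock, Matrix.of_apply, Pi.add_apply,
    Fintype.sum_prod_type, Fin.sum_univ_succ, aux12_glue, Fin.cases_zero, Fin.cases_succ,
    Fin.val_zero, Nat.sub_zero, Fin.val_succ]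
  congr 1
  refine Finset.sum_congr rfl fun k _ => Finset.sum_congr rfl fun b _ => ?_
  rw [show r - ((k : ℕ) + 1) = r - 1 - (k : ℕ) from by omega]

lemma aux12_M_mulVec (x : Fin p → ℝ) (w : Fin r × Fin p → ℝ) :
    (Mblock n p l (r + 1) A H C).mulVec (aux12_glue r p x w)
      = (aux12_F n p l r A H C).mulVec x
        + aux12_shift r l ((Mblock n p l r A H C).mulVec w) := by
  funext ia
  obtain ⟨i, a⟩ := ia
  induction i using Fin.cases with
  | zero =>
      simp [Mblock, aux12_F, aux12_glue, aux12_shift, Matrix.mulVec, dotProduct,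
        Fintype.sum_prod_type, Fin.sum_univ_succ]
  | succ m =>
      simp only [Mblock, aux12_F, aux12_glue, aux12_shift, Matrix.mulVec, dotProduct,
        Matrix.of_apply, Pi.add_apply, Fintype.sum_prod_type, Fin.sum_univ_succ,
        Fin.cases_zero, Fin.cases_succ, Fin.val_zero, Fin.val_succ, Nat.sub_zero,
        LinearMap.coe_mk, AddHom.coe_mk, Nat.zero_le, if_true]
      congr 1
      refine Finset.sum_congr rfl fun k _ => Finset.sum_congr rfl fun b _ => ?_
      have h1 : ((k : ℕ) + 1 ≤ (m : ℕ) + 1) = ((k : ℕ) ≤ (m : ℕ)) := by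
        simp [Nat.succ_le_succ_iff]
      have h2 : (m : ℕ) + 1 - ((k : ℕ) + 1) = (m : ℕ) - (k : ℕ) := by omega
      rw [h2]
      by_cases hk : (k : ℕ) ≤ (m : ℕ) <;> simp [hk]

lemma aux12_S_range :
    LinearMap.range (Sblock n p l r A H C).mulVecLin
      = LinearMap.range (C * A ^ r * H).mulVecLin
        ⊔ LinearMap.range (Matrix.of fun i (dj : Fin r × Fin p) =>
            (C * A ^ (r - 1 - (dj.1 : ℕ)) * H) i dj.2).mulVecLin := by
  apply le_antisymm
  · rintro _ ⟨u, rfl⟩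
    rw [Matrix.mulVecLin_apply, aux12_glue_eq r p u, aux12_S_mulVec]
    exact add_mem (mem_sup_left ⟨_, rfl⟩) (mem_sup_right ⟨_, rfl⟩)
  · apply sup_le
    · rintro _ ⟨x, rfl⟩
      refine ⟨aux12_glue r p x 0, ?_⟩
      rw [Matrix.mulVecLin_apply, aux12_S_mulVec, Matrix.mulVec_zero, add_zero,
        Matrix.mulVecLin_apply]
    · rintro _ ⟨w, rfl⟩
      refine ⟨aux12_glue r p 0 w, ?_⟩
      rw [Matrix.mulVecLin_apply, aux12_S_mulVec, Matrix.mulVec_zero, zero_add,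
        Matrix.mulVecLin_apply]

lemma aux12_M_range :
    LinearMap.range (Mblock n p l (r + 1) A H C).mulVecLin
      = LinearMap.range (aux12_F n p l r A H C).mulVecLin
        ⊔ (LinearMap.range (Mblock n p l r A H C).mulVecLin).map (aux12_shift r l) := by
  apply le_antisymm
  · rintro _ ⟨u, rfl⟩
    rw [Matrix.mulVecLin_apply, aux12_glue_eq r p u, aux12_M_mulVec]
    exact add_mem (mem_sup_left ⟨_, rfl⟩) (mem_sup_right ⟨_, ⟨_, rfl⟩, rfl⟩)
  · apply sup_le
    · rintro _ ⟨x, rfl⟩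
      refine ⟨aux12_glue r p x 0, ?_⟩
      rw [Matrix.mulVecLin_apply, aux12_M_mulVec, Matrix.mulVec_zero, map_zero, add_zero,
        Matrix.mulVecLin_apply]
    · rintro _ ⟨_, ⟨w, rfl⟩, rfl⟩
      refine ⟨aux12_glue r p 0 w, ?_⟩
      rw [Matrix.mulVecLin_apply, aux12_M_mulVec, Matrix.mulVec_zero, zero_add,
        Matrix.mulVecLin_apply]

/-- last block row of the shifted image equals `Sprev.mulVec` -/
lemma aux12_last_row (w : Fin r × Fin p → ℝ) (a : Fin l) :
    aux12_shift r l ((Mblock n p l r A H C).mulVec w) (Fin.last r, a)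
      = (Matrix.of fun i (dj : Fin r × Fin p) =>
          (C * A ^ (r - 1 - (dj.1 : ℕ)) * H) i dj.2).mulVec w a := by
  cases r with
  | zero =>
      have : (Fin.last 0) = (0 : Fin 1) := rfl
      simp [aux12_shift, this, Matrix.mulVec, dotProduct]
  | succ m =>
      have hlast : Fin.last (m + 1) = (Fin.last m).succ := rfl
      rw [hlast]
      simp only [aux12_shift, LinearMap.coe_mk, AddHom.coe_mk, Fin.cases_succ]
      simp only [Mblock, Matrix.mulVec, dotProduct, Matrix.of_apply]
      refine Finset.sum_congr rfl fun kb _ => ?_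
      have hk : (kb.1 : ℕ) ≤ (Fin.last m : ℕ) := by
        simpa [Fin.val_last] using Nat.lt_succ_iff.mp kb.1.isLt
      rw [if_pos hk]
      rw [show ((Fin.last m : ℕ) - (kb.1 : ℕ)) = (m + 1 - 1 - (kb.1 : ℕ)) from by
        simp [Fin.val_last]]

end main

theorem stmt_12 (n p l r : ℕ)
    (A : Matrix (Fin n) (Fin n) ℝ) (H : Matrix (Fin n) (Fin p) ℝ)
    (C : Matrix (Fin l) (Fin n) ℝ)
    (hH : H.rank = p)
    (Sprev : Matrix (Fin l) (Fin r × Fin p) ℝ)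
    (hSprev : Sprev = Matrix.of fun i dj => (C * A ^ (r - 1 - (dj.1 : ℕ)) * H) i dj.2)
    (hgap : (Sblock n p l r A H C).rank - Sprev.rank = p) :
    (Mblock n p l (r + 1) A H C).rank - (Mblock n p l r A H C).rank = p := by
  classical
  subst hSprev
  set B := C * A ^ r * H with hB
  set SP : Matrix (Fin l) (Fin r × Fin p) ℝ :=
    Matrix.of fun i dj => (C * A ^ (r - 1 - (dj.1 : ℕ)) * H) i dj.2 with hSP
  -- column space decomposition of S
  have hSr : LinearMap.range (Sblock n p l r A H C).mulVecLin
      = LinearMap.range B.mulVecLin ⊔ LinearMap.range SP.mulVecLin :=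
    aux12_S_range n p l r A H C
  -- rank S = rank SP + p
  have hle : SP.rank ≤ (Sblock n p l r A H C).rank := by
    apply Submodule.finrank_mono
    rw [hSr]; exact le_sup_right
  have hSrank : (Sblock n p l r A H C).rank = p + SP.rank := by omega
  have hkey := Submodule.finrank_sup_add_finrank_inf_eq
    (LinearMap.range B.mulVecLin) (LinearMap.range SP.mulVecLin)
  rw [← hSr] at hkey
  have hBle : B.rank ≤ p := by
    simpa using B.rank_le_card_width
  have hkey2 : (Sblock n p l r A H C).rank
      + Module.finrank ℝ
        ((LinearMap.range B.mulVecLin ⊓ LinearMap.range SP.mulVecLin : Submodule ℝ _) : Type _)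
      = B.rank + SP.rank := hkey
  have hBrank : B.rank = p := by omega
  have hinf0 : Module.finrank ℝ
      ((LinearMap.range B.mulVecLin ⊓ LinearMap.range SP.mulVecLin : Submodule ℝ _) : Type _)
        = 0 := by omega
  have hinfbot : LinearMap.range B.mulVecLin ⊓ LinearMap.range SP.mulVecLin = ⊥ :=
    Submodule.finrank_eq_zero.mp hinf0
  -- B has injective mulVecLin
  have hBinj : Function.Injective B.mulVecLin := by
    rw [← LinearMap.ker_eq_bot]
    apply Submodule.finrank_eq_zero.mp
    have hrn := LinearMap.finrank_range_add_finrank_ker B.mulVecLin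
    have hdom : Module.finrank ℝ (Fin p → ℝ) = p := by
      rw [Module.finrank_pi, Fintype.card_fin]
    have hBr : Module.finrank ℝ ((LinearMap.range B.mulVecLin : Submodule ℝ _) : Type _) = p :=
      hBrank
    omega
  -- the F matrix
  set F := aux12_F n p l r A H C with hF
  have hFlast : ∀ (x : Fin p → ℝ) (a : Fin l),
      F.mulVec x (Fin.last r, a) = B.mulVec x a := by
    intro x a
    simp [hF, aux12_F, hB, Matrix.mulVec, dotProduct, Fin.val_last]
  have hFinj : Function.Injective F.mulVecLin := by
    intro x y h
    apply hBinj
    funext a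
    have := congrFun h (Fin.last r, a)
    simpa [Matrix.mulVecLin_apply, hFlast] using this
  have hFrank : Module.finrank ℝ ((LinearMap.range F.mulVecLin : Submodule ℝ _) : Type _) = p := by
    rw [LinearMap.finrank_range_of_inj hFinj, Module.finrank_pi, Fintype.card_fin]
  -- decomposition of M_{r+1}
  have hM : LinearMap.range (Mblock n p l (r + 1) A H C).mulVecLin
      = LinearMap.range F.mulVecLin
        ⊔ (LinearMap.range (Mblock n p l r A H C).mulVecLin).map (aux12_shift r l) :=
    aux12_M_range n p l r A H C
  -- trivial intersection
  have hMinf : LinearMap.range F.mulVecLin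
      ⊓ (LinearMap.range (Mblock n p l r A H C).mulVecLin).map (aux12_shift r l) = ⊥ := by
    rw [eq_bot_iff]
    rintro v hv
    obtain ⟨⟨x, hx⟩, hv2⟩ := hv
    obtain ⟨-, ⟨w, rfl⟩, hw⟩ := hv2
    have hBx : B.mulVec x = SP.mulVec w := by
      funext a
      have h1 : B.mulVec x a = v (Fin.last r, a) := by
        rw [← hFlast x a, ← hx]; rfl
      have h2 : v (Fin.last r, a) = SP.mulVec w a := by
        rw [← hw]
        exact aux12_last_row n p l r A H C w a
      rw [h1, h2]
    have hmem : B.mulVec x ∈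
        (LinearMap.range B.mulVecLin ⊓ LinearMap.range SP.mulVecLin : Submodule ℝ _) :=
      ⟨⟨x, rfl⟩, ⟨w, hBx.symm⟩⟩
    rw [hinfbot, Submodule.mem_bot] at hmem
    have hx0 : x = 0 := hBinj (by simpa [Matrix.mulVecLin_apply] using hmem)
    rw [Submodule.mem_bot, ← hx, hx0, map_zero]
  -- finrank of mapped column space
  have hmapeq : Module.finrank ℝ
      (((LinearMap.range (Mblock n p l r A H C).mulVecLin).map (aux12_shift r l)
        : Submodule ℝ _) : Type _)
      = (Mblock n p l r A H C).rank :=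
    (LinearEquiv.finrank_eq
      (Submodule.equivMapOfInjective (aux12_shift r l) (aux12_shift_inj r l)
        (LinearMap.range (Mblock n p l r A H C).mulVecLin))).symm
  have hfin := Submodule.finrank_sup_add_finrank_inf_eq
    (LinearMap.range F.mulVecLin)
    ((LinearMap.range (Mblock n p l r A H C).mulVecLin).map (aux12_shift r l))
  rw [hMinf, finrank_bot] at hfin
  have hMrank : (Mblock n p l (r + 1) A H C).rank
      = Module.finrank ℝ ((LinearMap.range F.mulVecLin
          ⊔ (LinearMap.range (Mblock n p l r A H C).mulVecLin).map (aux12_shift r l)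
          : Submodule ℝ _) : Type _) := by
    rw [show (Mblock n p l (r + 1) A H C).rank
        = Module.finrank ℝ ((LinearMap.range (Mblock n p l (r + 1) A H C).mulVecLin
            : Submodule ℝ _) : Type _) from rfl, hM]
  omega
end

section
/- Let l = p, A ∈ ℂ^{n×n}, H ∈ ℂ^{n×p}, C ∈ ℂ^{p×n}, with C·A^d·H = 0 for 0 ≤ d < r and C·A^r·H invertible, and let L = H·(C·A^r·H)^{-1}. Then every eigenvalue of A − L·C·A^{r+1} is either zero or an invariant zero of (A,H,C); consequently, if (A,H,C) has no invariant zeros then A − L·C·A^{r+1} is nilpotent, and if all invariant zeros have modulus strictly less than 1 then the spectral radius of A − L·C·A^{r+1} is strictly less than 1. -/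
/-!
Write `F = A - H (C A^r H)⁻¹ C A^(r+1)`. Because `C A^d H = 0` for `d < r`, we get `C F^d = C A^d`
for `d ≤ r`, and the choice of gain makes `C A^r F = 0`; hence `C F^(r+1) = 0`. So an eigenvector
`v` of `F` for an eigenvalue `z ≠ 0` has `C v = 0`, and `(v, -(C A^r H)⁻¹ C A^(r+1) v)` is a
nonzero kernel vector of the Rosenbrock matrix at `z`. The nilpotency and spectral-radius claims
follow since a complex matrix has finitely many eigenvalues, the roots of its characteristic
polynomial.
-/

/-- `z` is an invariant zero of `(A,H,C)` if the Rosenbrock matrix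
`[[zI − A, −H],[C, 0]]` is singular. -/
def IsInvariantZero {n p : ℕ} (A : Matrix (Fin n) (Fin n) ℂ)
    (H : Matrix (Fin n) (Fin p) ℂ) (C : Matrix (Fin p) (Fin n) ℂ) (z : ℂ) : Prop :=
  (Matrix.fromBlocks (z • (1 : Matrix (Fin n) (Fin n) ℂ) - A) (-H) C
      (0 : Matrix (Fin p) (Fin p) ℂ)).det = 0

open Polynomial Matrix

theorem spectralRadius_lt_of_finite {𝕜 A : Type*} [NormedField 𝕜] [Ring A] [Algebra 𝕜 A] {a : A}
    (hfin : (spectrum 𝕜 a).Finite) {r : NNReal} (hr : 0 < r)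
    (h : ∀ z ∈ spectrum 𝕜 a, ‖z‖₊ < r) : spectralRadius 𝕜 a < r := by
  rw [spectralRadius, ← hfin.coe_toFinset]
  simp only [Finset.mem_coe]
  rw [← Finset.sup_eq_iSup, Finset.sup_lt_iff (by simpa using hr)]
  intro z hz
  exact ENNReal.coe_lt_coe.mpr (h z (hfin.mem_toFinset.mp hz))

theorem Matrix.isNilpotent_of_forall_mem_spectrum_eq_zero {K m : Type*} [Field K] [IsAlgClosed K]
    [Fintype m] [DecidableEq m] {F : Matrix m m K} (h : ∀ z ∈ spectrum K F, z = 0) :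
    IsNilpotent F := by
  have hroots : F.charpoly.roots = Multiset.replicate F.charpoly.roots.card 0 :=
    Multiset.eq_replicate_card.mpr fun z hz =>
      h z (mem_spectrum_iff_isRoot_charpoly.mpr (mem_roots'.mp hz).2)
  have hX : F.charpoly = X ^ F.charpoly.roots.card := by
    conv_lhs => rw [(IsAlgClosed.splits F.charpoly).eq_prod_roots_of_monic F.charpoly_monic,
      hroots, Multiset.map_replicate, Multiset.prod_replicate, map_zero, sub_zero]
  refine ⟨F.charpoly.roots.card, ?_⟩
  have hCH := aeval_self_charpoly F
  rwa [hX, map_pow, aeval_X] at hCH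

theorem Matrix.exists_mulVec_eq_smul_of_mem_spectrum {K m : Type*} [Field K]
    [Fintype m] [DecidableEq m] {F : Matrix m m K} {z : K} (hz : z ∈ spectrum K F) :
    ∃ v ≠ 0, F *ᵥ v = z • v := by
  rw [spectrum.mem_iff, isUnit_iff_isUnit_det, isUnit_iff_ne_zero, not_not,
    ← exists_mulVec_eq_zero_iff] at hz
  obtain ⟨v, hv, hzv⟩ := hz
  refine ⟨v, hv, ?_⟩
  rw [sub_mulVec, Algebra.algebraMap_eq_smul_one, smul_mulVec, one_mulVec, sub_eq_zero] at hzv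
  exact hzv.symm

theorem Matrix.mulVec_eq_zero_of_mul_pow_eq_zero {R m l : Type*} [CommRing R] [NoZeroDivisors R]
    [Fintype m] [DecidableEq m] {F : Matrix m m R} {C : Matrix l m R} {k : ℕ} (hCF : C * F ^ k = 0)
    {z : R} (hz : z ≠ 0) {v : m → R} (hv : F *ᵥ v = z • v) : C *ᵥ v = 0 := by
  have hpow : ∀ j : ℕ, F ^ j *ᵥ v = z ^ j • v := by
    intro j
    induction j with
    | zero => simp
    | succ j ih => rw [pow_succ', ← mulVec_mulVec, ih, mulVec_smul, hv, smul_smul, pow_succ]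
  have : z ^ k • C *ᵥ v = 0 := by
    rw [← mulVec_smul, ← hpow, mulVec_mulVec, hCF, zero_mulVec]
  exact (smul_eq_zero.mp this).resolve_left (pow_ne_zero k hz)

noncomputable def delayedFilterMatrix {R m ι : Type*} [CommRing R] [Fintype m] [DecidableEq m]
    [Fintype ι] [DecidableEq ι] (A : Matrix m m R) (H : Matrix m ι R) (C : Matrix ι m R)
    (r : ℕ) : Matrix m m R :=
  A - H * (C * A ^ r * H)⁻¹ * C * A ^ (r + 1)

theorem mul_delayedFilterMatrix_pow_succ_eq_zero {R m ι : Type*} [CommRing R] [Fintype m]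
    [DecidableEq m] [Fintype ι] [DecidableEq ι] {A : Matrix m m R} {H : Matrix m ι R}
    {C : Matrix ι m R} {r : ℕ} (hCd : ∀ d < r, C * A ^ d * H = 0)
    (hinv : IsUnit (C * A ^ r * H)) :
    C * delayedFilterMatrix A H C r ^ (r + 1) = 0 := by
  set F := delayedFilterMatrix A H C r
  have hstep : ∀ d, C * A ^ d * F
      = C * A ^ (d + 1) - C * A ^ d * H * ((C * A ^ r * H)⁻¹ * C * A ^ (r + 1)) := by
    intro d
    simp only [F, delayedFilterMatrix, Matrix.mul_sub, pow_succ, Matrix.mul_assoc]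
  have hpow : ∀ d ≤ r, C * F ^ d = C * A ^ d := by
    intro d hd
    induction d with
    | zero => simp
    | succ d ih =>
      rw [pow_succ, ← Matrix.mul_assoc, ih (by omega), hstep,
        hCd d hd, Matrix.zero_mul, sub_zero]
  have hlast : C * A ^ r * F = 0 := by
    rw [hstep, ← Matrix.mul_assoc, ← Matrix.mul_assoc,
      mul_nonsing_inv _ ((isUnit_iff_isUnit_det _).mp hinv), Matrix.one_mul, sub_self]
  rw [pow_succ, ← Matrix.mul_assoc, hpow r le_rfl, hlast]

theorem isInvariantZero_of_eigenvector {n p : ℕ} {A : Matrix (Fin n) (Fin n) ℂ}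
    {H : Matrix (Fin n) (Fin p) ℂ} {C : Matrix (Fin p) (Fin n) ℂ} (K : Matrix (Fin p) (Fin n) ℂ)
    {z : ℂ} {v : Fin n → ℂ} (hv : v ≠ 0) (hAv : (A - H * K) *ᵥ v = z • v) (hCv : C *ᵥ v = 0) :
    IsInvariantZero A H C z := by
  rw [IsInvariantZero, ← exists_mulVec_eq_zero_iff]
  refine ⟨Sum.elim v (-(K *ᵥ v)), fun h => hv (funext fun i => congrFun h (Sum.inl i)), ?_⟩
  have htopRow : (z • (1 : Matrix (Fin n) (Fin n) ℂ) - A) *ᵥ v + (-H) *ᵥ -(K *ᵥ v) = 0 := by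
    rw [neg_mulVec, mulVec_neg, neg_neg, mulVec_mulVec, ← add_mulVec,
      show z • 1 - A + H * K = z • 1 - (A - H * K) by abel, sub_mulVec, hAv, smul_mulVec,
      one_mulVec, sub_self]
  rw [fromBlocks_mulVec, Sum.elim_comp_inl, Sum.elim_comp_inr, htopRow, hCv, zero_mulVec,
    add_zero]
  ext (i | j) <;> rfl

theorem eq_zero_or_isInvariantZero_of_mem_spectrum {n p r : ℕ} {A : Matrix (Fin n) (Fin n) ℂ}
    {H : Matrix (Fin n) (Fin p) ℂ} {C : Matrix (Fin p) (Fin n) ℂ}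
    (hCd : ∀ d < r, C * A ^ d * H = 0) (hinv : IsUnit (C * A ^ r * H)) {z : ℂ}
    (hz : z ∈ spectrum ℂ (delayedFilterMatrix A H C r)) :
    z = 0 ∨ IsInvariantZero A H C z := by
  refine or_iff_not_imp_left.mpr fun hz0 => ?_
  obtain ⟨v, hv, hFv⟩ := exists_mulVec_eq_smul_of_mem_spectrum hz
  have hCv := mulVec_eq_zero_of_mul_pow_eq_zero
    (mul_delayedFilterMatrix_pow_succ_eq_zero hCd hinv) hz0 hFv
  refine isInvariantZero_of_eigenvector ((C * A ^ r * H)⁻¹ * C * A ^ (r + 1)) hv ?_ hCv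
  simpa only [delayedFilterMatrix, Matrix.mul_assoc] using hFv

theorem stmt_14 (n p r : ℕ)
    (A : Matrix (Fin n) (Fin n) ℂ) (H : Matrix (Fin n) (Fin p) ℂ)
    (C : Matrix (Fin p) (Fin n) ℂ)
    (hCd : ∀ d < r, C * A ^ d * H = 0)
    (hinv : IsUnit (C * A ^ r * H))
    (L : Matrix (Fin n) (Fin p) ℂ)
    (hL : L = H * (C * A ^ r * H)⁻¹) :
    (∀ z ∈ spectrum ℂ (A - L * C * A ^ (r + 1)), z = 0 ∨ IsInvariantZero A H C z) ∧
    ((∀ z : ℂ, ¬ IsInvariantZero A H C z) → IsNilpotent (A - L * C * A ^ (r + 1))) ∧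
    ((∀ z : ℂ, IsInvariantZero A H C z → ‖z‖ < 1) →
      spectralRadius ℂ (A - L * C * A ^ (r + 1)) < 1) := by
  have hF : A - L * C * A ^ (r + 1) = delayedFilterMatrix A H C r := by
    rw [hL, delayedFilterMatrix]
  have hspec := fun z (hz : z ∈ spectrum ℂ (delayedFilterMatrix A H C r)) =>
    eq_zero_or_isInvariantZero_of_mem_spectrum hCd hinv hz
  rw [hF]
  refine ⟨hspec, fun hnone => ?_, fun hstable => ?_⟩
  · exact isNilpotent_of_forall_mem_spectrum_eq_zero fun z hz =>
      (hspec z hz).resolve_right (hnone z)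
  · refine spectralRadius_lt_of_finite (finite_spectrum _) one_pos fun z hz => ?_
    rcases hspec z hz with rfl | hzero
    · simp
    · exact_mod_cast hstable z hzero
end

section
/- Let l = p = rank(H), r = 0, C·H invertible. Then L = H·(C·H)^{-1} is the unique matrix satisfying L·C·H = H, and every nonzero eigenvalue of A − L·C·A is an invariant zero of (A,H,C). -/
theorem stmt_16 (n p : ℕ)
    (A : Matrix (Fin n) (Fin n) ℂ) (H : Matrix (Fin n) (Fin p) ℂ)
    (C : Matrix (Fin p) (Fin n) ℂ)
    (hH : H.rank = p)
    (hinv : IsUnit (C * H))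
    (L : Matrix (Fin n) (Fin p) ℂ)
    (hL : L = H * (C * H)⁻¹) :
    L * C * H = H ∧
    (∀ L' : Matrix (Fin n) (Fin p) ℂ, L' * C * H = H → L' = L) ∧
    (∀ z ∈ spectrum ℂ (A - L * C * A), z ≠ 0 → IsInvariantZero A H C z) := by
  have hdet : IsUnit (C * H).det := (Matrix.isUnit_iff_isUnit_det _).mp hinv
  have hinvmul : (C * H)⁻¹ * (C * H) = 1 := Matrix.nonsing_inv_mul _ hdet
  have hmulinv : (C * H) * (C * H)⁻¹ = 1 := Matrix.mul_nonsing_inv _ hdet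
  have hLCH : L * C * H = H := by
    rw [hL, Matrix.mul_assoc, Matrix.mul_assoc,
      hinvmul, Matrix.mul_one]
  have hCL : C * L = 1 := by
    rw [hL, ← Matrix.mul_assoc, hmulinv]
  refine ⟨hLCH, ?_, ?_⟩
  · intro L' h
    calc L' = L' * ((C * H) * (C * H)⁻¹) := by rw [hmulinv, Matrix.mul_one]
    _ = (L' * C * H) * (C * H)⁻¹ := by rw [← Matrix.mul_assoc, ← Matrix.mul_assoc]
    _ = L := by rw [h, hL]
  · intro z hz hz0
    rw [spectrum.mem_iff, Algebra.algebraMap_eq_smul_one] at hz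
    have hdet0 : (z • (1 : Matrix (Fin n) (Fin n) ℂ) - (A - L * C * A)).det = 0 := by
      by_contra h
      exact hz ((Matrix.isUnit_iff_isUnit_det _).mpr (isUnit_iff_ne_zero.mpr h))
    obtain ⟨v, hv0, hv⟩ := (Matrix.exists_mulVec_eq_zero_iff).mpr hdet0
    have heig : (A - L * C * A).mulVec v = z • v := by
      have := hv
      rw [Matrix.sub_mulVec, Matrix.smul_mulVec, Matrix.one_mulVec, sub_eq_zero] at this
      exact this.symm
    have hCv : C.mulVec v = 0 := by
      have h1 : C.mulVec ((A - L * C * A).mulVec v) = z • C.mulVec v := by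
        rw [heig, Matrix.mulVec_smul]
      rw [Matrix.mulVec_mulVec, Matrix.mul_sub, ← Matrix.mul_assoc,
        ← Matrix.mul_assoc, hCL, Matrix.one_mul, sub_self, Matrix.zero_mulVec] at h1
      exact (smul_eq_zero.mp h1.symm).resolve_left hz0
    set w : Fin p → ℂ := -((C * H)⁻¹ * (C * A)).mulVec v with hw
    have hHw : (-H).mulVec w = (L * C * A).mulVec v := by
      rw [hw, Matrix.mulVec_neg, Matrix.neg_mulVec, neg_neg, Matrix.mulVec_mulVec,
        hL, Matrix.mul_assoc, Matrix.mul_assoc]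
    rw [IsInvariantZero]
    rw [← Matrix.exists_mulVec_eq_zero_iff]
    refine ⟨Sum.elim v w, ?_, ?_⟩
    · intro h
      apply hv0
      funext i
      have := congrFun h (Sum.inl i)
      simpa using this
    · rw [Matrix.fromBlocks_mulVec]
      simp only [Sum.elim_comp_inl, Sum.elim_comp_inr]
      have htop : (z • (1 : Matrix (Fin n) (Fin n) ℂ) - A).mulVec v + (-H).mulVec w = 0 := by
        rw [hHw, Matrix.sub_mulVec, Matrix.smul_mulVec, Matrix.one_mulVec]
        have : A.mulVec v - (L * C * A).mulVec v = z • v := by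
          rw [← Matrix.sub_mulVec]; exact heig
        rw [sub_add, ← this]; abel
      have hbot : C.mulVec v + (0 : Matrix (Fin p) (Fin p) ℂ).mulVec w = 0 := by
        rw [hCv, Matrix.zero_mulVec, add_zero]
      rw [htop, hbot]
      funext i; cases i <;> simp
end
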